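/- arXiv:2012.13389 — 2 statements merged into one kernel-verified Lean document; each statement's English description precedes it below -/
import Mathlib

section
/- The convex hull of the 8 even-weight vertices of {0,1}⁴ (those with an even number of 1's) equals the set of β ∈ [0,1]⁴ satisfying −2 ≤ β_i − Σ_{j≠i} β_j ≤ 0 for each i = 1,2,3,4. -/
/-!
The even vertices of `{0,1}⁴` are `c ± uₖ`, where `c = (½,½,½,½)` and the `uₖ` are the rows of the
normalised `4 × 4` Hadamard matrix, an orthonormal basis. So the 4-demicube is the cross-polytope
(16-cell) centred at `c` with these half-diagonals, i.e. `{c + ∑ yₖ uₖ | ∑ |yₖ| ≤ 1}`. Expanding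
`∑ |yₖ| ≤ 1` over the 16 sign patterns gives the 16 stated inequalities: eight are the cube bounds
`0 ≤ βᵢ ≤ 1`, the other eight are `-2 ≤ βᵢ - ∑_{j ≠ i} βⱼ ≤ 0`.
-/

open Finset

def evenCubeVertices (ι : Type*) [Fintype ι] : Set (ι → ℝ) :=
  {v | (∀ i, v i = 0 ∨ v i = 1) ∧ Even #{i | v i = 1}}

def demicubeIneqSet (ι : Type*) [Fintype ι] [DecidableEq ι] : Set (ι → ℝ) :=
  {β | (∀ i, β i ∈ Set.Icc (0 : ℝ) 1) ∧
    ∀ i, -2 ≤ β i - ∑ j ∈ univ.erase i, β j ∧ β i - ∑ j ∈ univ.erase i, β j ≤ 0}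

section CrossPolytope

variable {E ι : Type*} [AddCommGroup E] [Module ℝ E] [Fintype ι]

theorem sum_smul_mem_convexHull_of_sum_abs_le_one [Nonempty ι] (u : ι → E) {y : ι → ℝ}
    (hy : ∑ k, |y k| ≤ 1) : ∑ k, y k • u k ∈ convexHull ℝ (Set.range u ∪ Set.range (-u)) := by
  set S := convexHull ℝ (Set.range u ∪ Set.range (-u))
  have hu : ∀ k, u k ∈ S := fun k => subset_convexHull ℝ _ (Or.inl ⟨k, rfl⟩)
  have hneg : ∀ k, -u k ∈ S := fun k => subset_convexHull ℝ _ (Or.inr ⟨k, rfl⟩)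
  have hzero : (0 : E) ∈ S := by
    obtain ⟨k⟩ := ‹Nonempty ι›
    have := convex_convexHull ℝ _ (hu k) (hneg k) one_half_pos.le one_half_pos.le (add_halves 1)
    rwa [smul_neg, add_neg_cancel] at this
  -- the slack `1 - ∑ |yₖ|` is put on the origin
  let w : Option ι → ℝ := fun o => o.elim (1 - ∑ k, |y k|) fun k => |y k|
  let z : Option ι → E := fun o => o.elim 0 fun k => if 0 ≤ y k then u k else -u k
  have hw : ∀ o ∈ univ, 0 ≤ w o := by
    rintro (_ | k) _
    · simpa [w] using hy
    · exact abs_nonneg (y k)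
  have hz : ∀ o ∈ univ, z o ∈ S := by
    rintro (_ | k) _
    · exact hzero
    · simp only [z, Option.elim]
      split_ifs
      exacts [hu k, hneg k]
  have hcomb : ∑ o, w o • z o = ∑ k, y k • u k := by
    simp only [Fintype.sum_option, w, z, Option.elim, smul_zero, zero_add]
    refine sum_congr rfl fun k _ => ?_
    split_ifs with h
    · rw [abs_of_nonneg h]
    · rw [abs_of_neg (not_le.1 h), smul_neg, neg_smul, neg_neg]
  rw [← hcomb]
  exact (convex_convexHull ℝ _).sum_mem hw (by simp [w, Fintype.sum_option]) hz

end CrossPolytope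

section Inequalities

variable {ι : Type*} [Fintype ι]

theorem sum_eq_card_of_forall_eq_zero_or_eq_one {v : ι → ℝ} (hv : ∀ i, v i = 0 ∨ v i = 1) :
    ∑ i, v i = #{i | v i = 1} := by
  rw [← sum_boole]
  refine sum_congr rfl fun i _ => ?_
  rcases hv i with h | h <;> simp [h]

variable [DecidableEq ι]

theorem sub_sum_erase_eq_two_mul_sub_sum (β : ι → ℝ) (i : ι) :
    β i - ∑ j ∈ univ.erase i, β j = 2 * β i - ∑ j, β j := by
  rw [← add_sum_erase univ β (mem_univ i)]
  ring

theorem convex_demicubeIneqSet : Convex ℝ (demicubeIneqSet ι) := by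
  have hlin : ∀ i, IsLinearMap ℝ fun β : ι → ℝ => β i - ∑ j ∈ univ.erase i, β j := fun i =>
    ⟨fun x y => by simp only [Pi.add_apply, sum_add_distrib]; ring,
      fun a x => by simp only [Pi.smul_apply, smul_eq_mul, ← mul_sum]; ring⟩
  simp only [demicubeIneqSet, Set.mem_Icc, Set.ofPred_and, Set.ofPred_forall]
  refine .inter (convex_iInter fun i => .inter ?_ ?_) (convex_iInter fun i => .inter ?_ ?_)
  · exact convex_halfSpace_ge (LinearMap.proj i : (ι → ℝ) →ₗ[ℝ] ℝ).isLinear 0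
  · exact convex_halfSpace_le (LinearMap.proj i : (ι → ℝ) →ₗ[ℝ] ℝ).isLinear 1
  · exact convex_halfSpace_ge (hlin i) (-2)
  · exact convex_halfSpace_le (hlin i) 0

/-- At an even vertex with `n` ones, `βᵢ - ∑_{j ≠ i} βⱼ = 2βᵢ - n`; evenness forces `n ≤ 2`
when `βᵢ = 0` and `n ≥ 2` when `βᵢ = 1`. -/
theorem evenCubeVertices_subset_demicubeIneqSet (hcard : Fintype.card ι ≤ 4) :
    evenCubeVertices ι ⊆ demicubeIneqSet ι := by
  rintro v ⟨hv, ⟨m, hm⟩⟩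
  refine ⟨fun i => by rcases hv i with h | h <;> simp [h], fun i => ?_⟩
  rw [sub_sum_erase_eq_two_mul_sub_sum, sum_eq_card_of_forall_eq_zero_or_eq_one hv, hm]
  have hle : #{j | v j = 1} ≤ Fintype.card ι := card_le_univ _
  rcases hv i with h | h
  · have hlt : #{j | v j = 1} < Fintype.card ι := card_lt_univ_of_notMem (x := i) (by simp [h])
    have : (m : ℝ) ≤ 1 := by exact_mod_cast (by omega : m ≤ 1)
    rw [h]
    push_cast
    constructor <;> linarith [m.cast_nonneg (α := ℝ)]
  · have hpos : 0 < #{j | v j = 1} := card_pos.2 ⟨i, by simp [h]⟩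
    have : (1 : ℝ) ≤ m ∧ (m : ℝ) ≤ 2 := by constructor <;> exact_mod_cast (by omega)
    rw [h]
    push_cast
    constructor <;> linarith

end Inequalities

namespace Demicube4

open scoped Pointwise

noncomputable section

def center : Fin 4 → ℝ := ![1/2, 1/2, 1/2, 1/2]

def dir : Fin 4 → Fin 4 → ℝ :=
  ![![1/2, 1/2, 1/2, 1/2], ![1/2, 1/2, -1/2, -1/2], ![1/2, -1/2, 1/2, -1/2], ![1/2, -1/2, -1/2, 1/2]]

def coord (β : Fin 4 → ℝ) (k : Fin 4) : ℝ := ∑ i, dir k i * (β i - 1 / 2)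

theorem center_add_sum_coord_smul_dir (β : Fin 4 → ℝ) :
    center + ∑ k, coord β k • dir k = β := by
  ext i
  fin_cases i <;> simp [center, coord, dir, Fin.sum_univ_four] <;> ring

theorem center_vadd_dir_subset :
    center +ᵥ (Set.range dir ∪ Set.range (-dir)) ⊆ evenCubeVertices (Fin 4) := by
  rintro _ ⟨_, ⟨k, rfl⟩ | ⟨k, rfl⟩, rfl⟩ <;> fin_cases k
  all_goals
    simp only [vadd_eq_add, evenCubeVertices, Set.mem_ofPred_eq, card_filter, Fin.sum_univ_four,
      Fin.forall_fin_succ, Pi.add_apply, Pi.neg_apply]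
    norm_num [center, dir, Matrix.cons_val_two, Matrix.cons_val_three, Matrix.tail_cons,
      Matrix.head_cons]

theorem sum_abs_coord_le_one {β : Fin 4 → ℝ} (hβ : β ∈ demicubeIneqSet (Fin 4)) :
    ∑ k, |coord β k| ≤ 1 := by
  obtain ⟨hcube, hfacet⟩ := hβ
  simp only [Set.mem_Icc, sub_sum_erase_eq_two_mul_sub_sum, Fin.sum_univ_four] at hcube hfacet
  obtain ⟨⟨c0, c0'⟩, ⟨c1, c1'⟩, ⟨c2, c2'⟩, ⟨c3, c3'⟩⟩ :=
    And.intro (hcube 0) <| And.intro (hcube 1) <| And.intro (hcube 2) (hcube 3)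
  obtain ⟨⟨f0, f0'⟩, ⟨f1, f1'⟩, ⟨f2, f2'⟩, ⟨f3, f3'⟩⟩ :=
    And.intro (hfacet 0) <| And.intro (hfacet 1) <| And.intro (hfacet 2) (hfacet 3)
  simp only [Fin.sum_univ_four]
  rcases abs_cases (coord β 0) with ⟨e0, -⟩ | ⟨e0, -⟩ <;>
  rcases abs_cases (coord β 1) with ⟨e1, -⟩ | ⟨e1, -⟩ <;>
  rcases abs_cases (coord β 2) with ⟨e2, -⟩ | ⟨e2, -⟩ <;>
  rcases abs_cases (coord β 3) with ⟨e3, -⟩ | ⟨e3, -⟩ <;>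
  rw [e0, e1, e2, e3] <;>
  simp only [coord, dir, Fin.sum_univ_four] <;>
  simp <;>
  linarith

end

end Demicube4

theorem stmt_12 :
    convexHull ℝ
        {v : Fin 4 → ℝ | (∀ i, v i = 0 ∨ v i = 1) ∧
          Even (Finset.univ.filter (fun i => v i = 1)).card} =
      {β : Fin 4 → ℝ | (∀ i, β i ∈ Set.Icc (0 : ℝ) 1) ∧
        ∀ i : Fin 4,
          -2 ≤ β i - ∑ j ∈ Finset.univ.erase i, β j ∧
          β i - ∑ j ∈ Finset.univ.erase i, β j ≤ 0} := by
  change convexHull ℝ (evenCubeVertices (Fin 4)) = demicubeIneqSet (Fin 4)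
  refine (convexHull_min (evenCubeVertices_subset_demicubeIneqSet (by simp))
    convex_demicubeIneqSet).antisymm fun β hβ => ?_
  have hcross := sum_smul_mem_convexHull_of_sum_abs_le_one Demicube4.dir
    (Demicube4.sum_abs_coord_le_one hβ)
  rw [← Demicube4.center_add_sum_coord_smul_dir β]
  refine convexHull_mono Demicube4.center_vadd_dir_subset ?_
  rw [convexHull_vadd]
  exact Set.vadd_mem_vadd_set hcross
end

section
/- The convex hull of the 8 odd-weight vertices of {0,1}⁴ (those with an odd number of 1's) equals the set of β ∈ [0,1]⁴ satisfying 1 ≤ β₁+β₂+β₃+β₄ ≤ 3 and −1 ≤ β_i + β_j − β_k − β_l ≤ 1 for every partition {i,j} ⊔ {k,l} = {1,2,3,4}. -/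
/-!
The inequalities cut out a convex set containing the odd vertices, which gives one inclusion.
Conversely, the odd vertices of `{0,1}⁴` are the `eₖ` and `1 - eₖ`, and
`∑ aₖ eₖ + ∑ bₖ (1 - eₖ)` has `k`-th coordinate `aₖ + ∑ b - bₖ`. For `β` satisfying the
inequalities, comparing coordinate sums forces `∑ b = M := (∑ β - 1) / 2`, so we need
`aₖ - bₖ = βₖ - M` with `a, b ≥ 0`. Take `bₖ = (M - βₖ)⁺ + c` and `aₖ = (βₖ - M)⁺ + c`; then
`c ≥ 0` amounts to `∑_{k ∈ T} (M - βₖ) ≤ M` for every `T ⊆ {0,1,2,3}`, and for `|T| = 0, …, 4`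
this is exactly `∑ β ≥ 1`, `βₖ ≥ 0`, the pair inequalities, `βₖ ≤ 1` and `∑ β ≤ 3`.
-/

open Finset

section ZeroOneVectors

variable {ι : Type*}

lemma sum_eq_card_filter_of_forall_eq_zero_or_one {v : ι → ℝ} (hv : ∀ i, v i = 0 ∨ v i = 1)
    (I : Finset ι) : ∑ i ∈ I, v i = #{i ∈ I | v i = 1} := by
  rw [natCast_card_filter]
  refine sum_congr rfl fun i _ => ?_
  rcases hv i with h | h <;> simp [h]

variable [Fintype ι]

def oddVertices (ι : Type*) [Fintype ι] : Set (ι → ℝ) :=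
  {v | (∀ i, v i = 0 ∨ v i = 1) ∧ Odd (univ.filter (fun i => v i = 1)).card}

lemma sum_max_zero_le_of_forall_sum_le {f : ι → ℝ} {C : ℝ}
    (h : ∀ T : Finset ι, ∑ i ∈ T, f i ≤ C) : ∑ i, max (f i) 0 ≤ C := by
  calc ∑ i, max (f i) 0 = ∑ i ∈ univ with 0 ≤ f i, f i := by
        rw [sum_filter]
        refine sum_congr rfl fun i _ => ?_
        split_ifs with hi
        exacts [max_eq_left hi, max_eq_right (le_of_not_ge hi)]
    _ ≤ C := h _

variable [DecidableEq ι]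

lemma single_mem_oddVertices (i : ι) : Pi.single i 1 ∈ oddVertices ι := by
  refine ⟨fun k => ?_, ?_⟩
  · by_cases hk : k = i <;> simp [hk]
  · have : univ.filter (fun k => (Pi.single i 1 : ι → ℝ) k = 1) = {i} := by
      ext k; by_cases hk : k = i <;> simp [Pi.single_apply, hk]
    simp [this]

lemma one_sub_single_mem_oddVertices (hι : Even (Fintype.card ι)) (i : ι) :
    1 - Pi.single i 1 ∈ oddVertices ι := by
  refine ⟨fun k => ?_, ?_⟩
  · by_cases hk : k = i <;> simp [hk]
  · have : univ.filter (fun k => (1 - Pi.single i 1 : ι → ℝ) k = 1) = {i}ᶜ := by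
      ext k; by_cases hk : k = i <;> simp [Pi.single_apply, hk]
    rw [this, card_compl, card_singleton]
    exact Nat.Even.sub_odd (Fintype.card_pos_iff.mpr ⟨i⟩) hι odd_one

lemma sum_smul_single_add_sum_smul_one_sub_single (a b : ι → ℝ) :
    ∑ i, a i • Pi.single i 1 + ∑ i, b i • (1 - Pi.single i 1) =
      fun k => a k + ∑ i, b i - b k := by
  funext k
  simp [Finset.sum_apply, Pi.single_apply, mul_sub, add_sub_assoc]

lemma mem_convexHull_of_single_of_one_sub_single {s : Set (ι → ℝ)}
    (hs₁ : ∀ i, Pi.single i 1 ∈ s) (hs₂ : ∀ i, 1 - Pi.single i 1 ∈ s) {a b : ι → ℝ}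
    (ha : ∀ i, 0 ≤ a i) (hb : ∀ i, 0 ≤ b i) (hab : ∑ i, a i + ∑ i, b i = 1) :
    (fun k => a k + ∑ i, b i - b k) ∈ convexHull ℝ s := by
  rw [← sum_smul_single_add_sum_smul_one_sub_single]
  have := (convex_convexHull ℝ s).sum_mem (t := univ) (w := Sum.elim a b)
    (z := Sum.elim (fun i => Pi.single i 1) (fun i => 1 - Pi.single i 1))
    (by rintro (i | i) - <;> simp [ha, hb]) (by simpa [Fintype.sum_sum_type] using hab)
    (by rintro (i | i) - <;> exact subset_convexHull ℝ s (by simp [hs₁, hs₂]))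
  simpa [Fintype.sum_sum_type] using this

end ZeroOneVectors

def demicubeIneqs : Set (Fin 4 → ℝ) :=
  {β | (∀ i, β i ∈ Set.Icc (0 : ℝ) 1) ∧
    (1 ≤ β 0 + β 1 + β 2 + β 3 ∧ β 0 + β 1 + β 2 + β 3 ≤ 3) ∧
    ∀ I : Finset (Fin 4), I.card = 2 →
      -1 ≤ (∑ i ∈ I, β i) - (∑ j ∈ Iᶜ, β j) ∧ (∑ i ∈ I, β i) - (∑ j ∈ Iᶜ, β j) ≤ 1}

lemma convex_demicubeIneqs : Convex ℝ demicubeIneqs := by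
  intro x hx y hy s t hs ht hst
  have hIcc {f : (Fin 4 → ℝ) → ℝ} (hf : IsLinearMap ℝ f) {l u : ℝ}
      (hx : l ≤ f x ∧ f x ≤ u) (hy : l ≤ f y ∧ f y ≤ u) :
      l ≤ f (s • x + t • y) ∧ f (s • x + t • y) ≤ u :=
    (convex_Icc l u).is_linear_preimage hf hx hy hs ht hst
  refine ⟨fun i => hIcc (LinearMap.proj i).isLinear (hx.1 i) (hy.1 i),
    hIcc (f := fun β => β 0 + β 1 + β 2 + β 3) ⟨fun β γ => ?_, fun r β => ?_⟩ hx.2.1 hy.2.1,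
    fun I hI => hIcc (f := fun β => ∑ i ∈ I, β i - ∑ j ∈ Iᶜ, β j) ⟨fun β γ => ?_, fun r β => ?_⟩
      (hx.2.2 I hI) (hy.2.2 I hI)⟩
  all_goals simp only [Pi.add_apply, Pi.smul_apply, smul_eq_mul, sum_add_distrib, ← mul_sum]; ring

lemma oddVertices_subset_demicubeIneqs : oddVertices (Fin 4) ⊆ demicubeIneqs := by
  rintro v ⟨hv, hodd⟩
  have hsum := sum_eq_card_filter_of_forall_eq_zero_or_one hv
  have hT : #{i | v i = 1} ≤ 4 := card_le_univ _
  rw [Nat.odd_iff] at hodd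
  refine ⟨fun i => ?_, ?_, fun I hI => ?_⟩
  · rcases hv i with h | h <;> simp [h]
  · rw [← Fin.sum_univ_four, hsum]
    constructor <;> exact_mod_cast (by omega)
  · have hsplit : #{i ∈ I | v i = 1} + #{i ∈ Iᶜ | v i = 1} = #{i | v i = 1} := by
      have := sum_add_sum_compl I v
      rw [hsum, hsum, hsum] at this
      exact_mod_cast this
    have hI₁ : #{i ∈ I | v i = 1} ≤ 2 := hI ▸ card_filter_le _ _
    have hI₂ : #{i ∈ Iᶜ | v i = 1} ≤ 2 := by
      have := card_filter_le Iᶜ (v · = 1)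
      rw [card_compl, hI, Fintype.card_fin] at this
      exact this
    rw [hsum, hsum]
    constructor
    · have : (-1 : ℤ) ≤ #{i ∈ I | v i = 1} - #{i ∈ Iᶜ | v i = 1} := by omega
      exact_mod_cast this
    · have : (#{i ∈ I | v i = 1} : ℤ) - #{i ∈ Iᶜ | v i = 1} ≤ 1 := by omega
      exact_mod_cast this

lemma sum_sub_le_of_mem_demicubeIneqs {β : Fin 4 → ℝ} (hβ : β ∈ demicubeIneqs)
    (T : Finset (Fin 4)) : ∑ i ∈ T, ((∑ j, β j - 1) / 2 - β i) ≤ (∑ j, β j - 1) / 2 := by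
  obtain ⟨hcoord, ⟨hS₁, hS₃⟩, hpair⟩ := hβ
  rw [← Fin.sum_univ_four] at hS₁ hS₃
  have hsplit := sum_add_sum_compl T β
  rw [sum_sub_distrib, sum_const, nsmul_eq_mul]
  have hcompl : #Tᶜ = 4 - #T := by rw [card_compl, Fintype.card_fin]
  have hT : #T ≤ 4 := by simpa using card_le_univ T
  obtain h | h | h | h | h : #T = 0 ∨ #T = 1 ∨ #T = 2 ∨ #T = 3 ∨ #T = 4 := by omega
  · rw [h, card_eq_zero.mp h, sum_empty]; push_cast; linarith
  · obtain ⟨k, rfl⟩ := card_eq_one.mp h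
    simp [(hcoord k).1]
  · have := (hpair T h).1
    rw [h]; push_cast; linarith
  · obtain ⟨k, hk⟩ := card_eq_one.mp (show #Tᶜ = 1 by omega)
    rw [hk, sum_singleton] at hsplit
    rw [h]; push_cast; linarith [(hcoord k).2]
  · rw [card_eq_zero.mp (show #Tᶜ = 0 by omega), sum_empty, add_zero] at hsplit
    rw [h]; push_cast; linarith

lemma demicubeIneqs_subset_convexHull : demicubeIneqs ⊆ convexHull ℝ (oddVertices (Fin 4)) := by
  intro β hβ
  set M := (∑ j, β j - 1) / 2 with hM
  set c := (M - ∑ k, max (M - β k) 0) / 4 with hc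
  have hc₀ : 0 ≤ c := by
    have := sum_max_zero_le_of_forall_sum_le (sum_sub_le_of_mem_demicubeIneqs hβ)
    linarith
  set a : Fin 4 → ℝ := fun k => max (β k - M) 0 + c
  set b : Fin 4 → ℝ := fun k => max (M - β k) 0 + c
  have hab (k : Fin 4) : a k - b k = β k - M := by
    simp only [a, b, add_sub_add_right_eq_sub, ← neg_sub (β k), max_zero_sub_eq_self]
  have hb : ∑ k, b k = M := by
    simp only [b, sum_add_distrib, sum_const, card_univ, Fintype.card_fin, nsmul_eq_mul, hc]
    ring
  have hβ_eq : β = fun k => a k + ∑ i, b i - b k := by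
    funext k; rw [hb]; linarith [hab k]
  rw [hβ_eq]
  refine mem_convexHull_of_single_of_one_sub_single single_mem_oddVertices
    (one_sub_single_mem_oddVertices (by decide)) (fun k => by positivity)
    (fun k => by positivity) ?_
  have hsum_a : ∑ k, a k = ∑ k, b k + ∑ k, β k - 4 * M := by
    simp only [Fin.sum_univ_four]; linarith [hab 0, hab 1, hab 2, hab 3]
  rw [hsum_a, hb, hM]; ring

theorem stmt_13 :
    convexHull ℝ
        {v : Fin 4 → ℝ | (∀ i, v i = 0 ∨ v i = 1) ∧
          Odd (Finset.univ.filter (fun i => v i = 1)).card} =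
      {β : Fin 4 → ℝ | (∀ i, β i ∈ Set.Icc (0 : ℝ) 1) ∧
        (1 ≤ β 0 + β 1 + β 2 + β 3 ∧ β 0 + β 1 + β 2 + β 3 ≤ 3) ∧
        ∀ I : Finset (Fin 4), I.card = 2 →
          -1 ≤ (∑ i ∈ I, β i) - (∑ j ∈ Iᶜ, β j) ∧
            (∑ i ∈ I, β i) - (∑ j ∈ Iᶜ, β j) ≤ 1} :=
  (convexHull_min oddVertices_subset_demicubeIneqs convex_demicubeIneqs).antisymm
    demicubeIneqs_subset_convexHull
end
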